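/- Let α ∈ ℝ, h > 0, t_n ∈ ℝ, k ≥ 1 an integer, and let c̃(t) = Σ_{j=0}^{k−1} (γ_j / j!) ((t − t_n)/h)^j be a polynomial with coefficients γ_0, …, γ_{k−1} ∈ ℝ. If y : [t_n, t_n + h] → ℝ is differentiable and satisfies y'(t) = α·y(t) + c̃(t) on [t_n, t_n + h], then y(t_n + h) = e^{α h} y(t_n) + h Σ_{j=0}^{k−1} γ_j φ_{j+1}(α h); that is, the exponential Adams–Bashforth one-step update is exact when the nonlinear remainder is the polynomial c̃. -/

import Mathlib

/-!
Termwise differentiation shows that `ψ_j(s) = s^(j+1) φ_{j+1}(α s)` has derivative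
`s^j φ_j(α s)`, which by the recurrence `φ_j(z) = 1/j! + z φ_{j+1}(z)` equals
`α ψ_j(s) + s^j / j!`. Hence `w(t) = Σ_j γ_j h^{-j} (t - t_n)^(j+1) φ_{j+1}(α (t - t_n))` is a
particular solution of `y' = α y + c̃` vanishing at `t_n`, and `y - w` solves `u' = α u`, so
it is multiplied by exactly `e^{α h}` over the step, while `w(t_n + h) = h Σ_j γ_j φ_{j+1}(α h)`.
-/

noncomputable def phi (j : ℕ) (z : ℝ) : ℝ := ∑' n : ℕ, z ^ n / (Nat.factorial (n + j))

open Set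
open scoped Nat

lemma summable_pow_div_factorial_add (j : ℕ) (z : ℝ) :
    Summable fun n : ℕ => z ^ n / (n + j)! := by
  refine (Real.summable_pow_div_factorial |z|).of_norm_bounded fun n => ?_
  rw [norm_div, norm_pow, Real.norm_eq_abs, Real.norm_natCast]
  gcongr
  exact n.le_add_right j

lemma phi_eq_inv_factorial_add_mul_phi_succ (j : ℕ) (z : ℝ) :
    phi j z = 1 / j ! + z * phi (j + 1) z := by
  rw [phi, (summable_pow_div_factorial_add j z).tsum_eq_zero_add, phi, ← tsum_mul_left]
  congr 1
  · simp
  · refine tsum_congr fun n => ?_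
    rw [pow_succ', mul_div_assoc, add_right_comm, add_assoc]

lemma pow_mul_phi_eq_tsum (j : ℕ) (α s : ℝ) :
    s ^ j * phi j (α * s) = ∑' n : ℕ, α ^ n * s ^ (n + j) / (n + j)! := by
  rw [phi, ← tsum_mul_left]
  refine tsum_congr fun n => ?_
  ring

lemma hasDerivAt_pow_succ_mul_phi_succ (j : ℕ) (α s : ℝ) :
    HasDerivAt (fun s => s ^ (j + 1) * phi (j + 1) (α * s)) (s ^ j * phi j (α * s)) s := by
  set R := |s| + 1
  simp only [pow_mul_phi_eq_tsum]
  refine hasDerivAt_tsum_of_isPreconnected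
    (u := fun n => R ^ j * ((|α| * R) ^ n / (n + j)!))
    (g := fun n x => α ^ n * x ^ (n + (j + 1)) / (n + (j + 1))!)
    (g' := fun n x => α ^ n * x ^ (n + j) / (n + j)!) (t := Ioo (-R) R) (y₀ := 0)
    ((summable_pow_div_factorial_add j _).mul_left _) isOpen_Ioo isPreconnected_Ioo
    (fun n x _ => ?_) (fun n x hx => ?_) ?_ ?_ ?_
  · have := ((hasDerivAt_pow (n + (j + 1)) x).const_mul (α ^ n)).div_const ((n + (j + 1))! : ℝ)
    refine this.congr_deriv ?_
    rw [← add_assoc, Nat.factorial_succ]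
    push_cast
    field_simp
  · have hxR : |x| ≤ R := abs_le.2 ⟨hx.1.le, hx.2.le⟩
    rw [norm_div, norm_mul, norm_pow, norm_pow, Real.norm_eq_abs, Real.norm_eq_abs,
      Real.norm_natCast, mul_pow, pow_add]
    have : |x| ^ n * |x| ^ j ≤ R ^ n * R ^ j := by gcongr
    calc |α| ^ n * (|x| ^ n * |x| ^ j) / (n + j)! ≤ |α| ^ n * (R ^ n * R ^ j) / (n + j)! := by
          gcongr
      _ = _ := by ring
  · simpa using show 0 < R by positivity
  · simp
  · simp only [mem_Ioo, R]
    constructor <;> linarith [neg_abs_le s, le_abs_self s]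

lemma eq_exp_mul_of_hasDerivWithinAt_mul_self {u : ℝ → ℝ} {α a b : ℝ} (hab : a ≤ b)
    (hu : ∀ t ∈ Icc a b, HasDerivWithinAt u (α * u t) (Icc a b) t) :
    u b = Real.exp (α * (b - a)) * u a := by
  set g : ℝ → ℝ := fun t => Real.exp (-(α * (t - a))) * u t
  have hg : ∀ t ∈ Icc a b, HasDerivWithinAt g 0 (Icc a b) t := by
    intro t ht
    have hexp : HasDerivAt (fun t => Real.exp (-(α * (t - a))))
        (Real.exp (-(α * (t - a))) * -α) t := by
      simpa using ((((hasDerivAt_id t).sub_const a).const_mul α).neg).exp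
    exact (hexp.hasDerivWithinAt.mul (hu t ht)).congr_deriv (by ring)
  have hconst := constant_of_has_deriv_right_zero (fun t ht => (hg t ht).continuousWithinAt)
    (fun t ht => (hg t (Ico_subset_Icc_self ht)).mono_of_mem_nhdsWithin
      (Icc_mem_nhdsGE_of_mem ht)) b (right_mem_Icc.2 hab)
  simp only [g, sub_self, mul_zero, neg_zero, Real.exp_zero, one_mul] at hconst
  rw [← hconst, ← mul_assoc, ← Real.exp_add]
  simp

lemma hasDerivAt_sum_pow_succ_mul_phi_succ (α a : ℝ) (c : ℕ → ℝ) (k : ℕ) (t : ℝ) :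
    HasDerivAt
      (fun t => ∑ j ∈ Finset.range k, c j * ((t - a) ^ (j + 1) * phi (j + 1) (α * (t - a))))
      (α * ∑ j ∈ Finset.range k, c j * ((t - a) ^ (j + 1) * phi (j + 1) (α * (t - a))) +
        ∑ j ∈ Finset.range k, c j * ((t - a) ^ j / j !)) t := by
  have hterm := fun j (_ : j ∈ Finset.range k) =>
    ((hasDerivAt_pow_succ_mul_phi_succ j α (t - a)).comp_sub_const t a).const_mul (c j)
  refine (HasDerivAt.fun_sum hterm).congr_deriv ?_
  simp only [Finset.mul_sum, ← Finset.sum_add_distrib]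
  refine Finset.sum_congr rfl fun j _ => ?_
  rw [phi_eq_inv_factorial_add_mul_phi_succ j]
  ring

theorem EAB_update_exact_general (α h tn : ℝ) (hh : 0 < h) (k : ℕ)
    (γ : ℕ → ℝ) (y : ℝ → ℝ)
    (hy : ∀ t ∈ Set.Icc tn (tn + h),
      HasDerivWithinAt y
        (α * y t + ∑ j ∈ Finset.range k,
          (γ j / (Nat.factorial j : ℝ)) * ((t - tn) / h) ^ j)
        (Set.Icc tn (tn + h)) t) :
    y (tn + h) =
      Real.exp (α * h) * y tn +
        h * ∑ j ∈ Finset.range k, γ j * phi (j + 1) (α * h) := by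
  have hh₀ : h ≠ 0 := hh.ne'
  set w : ℝ → ℝ := fun t => ∑ j ∈ Finset.range k,
    γ j / h ^ j * ((t - tn) ^ (j + 1) * phi (j + 1) (α * (t - tn)))
  have hc : ∀ t, ∑ j ∈ Finset.range k, γ j / j ! * ((t - tn) / h) ^ j =
      ∑ j ∈ Finset.range k, γ j / h ^ j * ((t - tn) ^ j / j !) := fun t =>
    Finset.sum_congr rfl fun j _ => by rw [div_pow]; ring
  have hw : ∀ t, HasDerivAt w
      (α * w t + ∑ j ∈ Finset.range k, γ j / j ! * ((t - tn) / h) ^ j) t := fun t => by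
    rw [hc]
    exact hasDerivAt_sum_pow_succ_mul_phi_succ α tn _ k t
  have hu := eq_exp_mul_of_hasDerivWithinAt_mul_self (u := fun t => y t - w t)
    (by linarith : tn ≤ tn + h) fun t ht =>
      ((hy t ht).sub (hw t).hasDerivWithinAt).congr_deriv (by ring)
  have hw₀ : w tn = 0 := by simp [w]
  have hw₁ : w (tn + h) = h * ∑ j ∈ Finset.range k, γ j * phi (j + 1) (α * h) := by
    simp only [w, add_sub_cancel_left, Finset.mul_sum]
    refine Finset.sum_congr rfl fun j _ => ?_
    field_simp
    ring
  simp only [hw₀, hw₁, add_sub_cancel_left, sub_zero] at hu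
  linarith

/-- The exponential Adams–Bashforth one-step update is exact when the nonlinear
remainder is the polynomial `c̃(t) = Σ_{j<k} (γ_j/j!) ((t-t_n)/h)^j`. -/
theorem EAB_update_exact (α h tn : ℝ) (hh : 0 < h) (k : ℕ) (hk : 1 ≤ k)
    (γ : ℕ → ℝ) (y : ℝ → ℝ)
    (hy : ∀ t ∈ Set.Icc tn (tn + h),
      HasDerivWithinAt y
        (α * y t + ∑ j ∈ Finset.range k,
          (γ j / (Nat.factorial j : ℝ)) * ((t - tn) / h) ^ j)
        (Set.Icc tn (tn + h)) t) :
    y (tn + h) =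
      Real.exp (α * h) * y tn +
        h * ∑ j ∈ Finset.range k, γ j * phi (j + 1) (α * h) :=
  EAB_update_exact_general α h tn hh k γ y hy
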